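/- arXiv:2309.04056 — 2 statements merged into one kernel-verified Lean document; each statement's English description precedes it below -/
import Mathlib

section
/- Let Ā, P, Ē ∈ ℝ^{q×q} with P symmetric positive definite and Ē invertible, C̄ ∈ ℝ^{p×q}, N₁ ∈ ℝ^{q×p}, N₂ ∈ ℝ^{q×q}, B̄_f ∈ ℝ^{q×m}, C_ω ∈ ℝ^{p×p}, H₁ ∈ ℝ^{m×p}, H₂ ∈ ℝ^{p×p}, H₃ ∈ ℝ^{p×q}. Set L = Ē P⁻¹ N₁ and 𝓛 = Ē P⁻¹ N₂, and assume: (i) the symmetric block matrix Ξ = [[Ξ₁₁, Ξ₁₂],[Ξ₁₂ᵀ, Ξ₂₂]] is negative definite, where Ξ₁₁ = P Ē⁻¹ Ā + (P Ē⁻¹ Ā)ᵀ − N₁ C̄ − C̄ᵀ N₁ᵀ, Ξ₁₂ = (N₁ C̄)ᵀ, Ξ₂₂ = P Ē⁻¹ Ā + (P Ē⁻¹ Ā)ᵀ − N₂ − N₂ᵀ; (ii) (H₁ C̄)ᵀ = P Ē⁻¹ B̄_f, (H₂ C̄)ᵀ = P Ē⁻¹ L C_ω, and H₃ᵀ = P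 Ē⁻¹ L C_ω. Let ρ = c + η with c ≥ 0, η ≥ 0, and ω̄ ≥ 0. Let ē, ε̄ : ℝ → ℝ^q be differentiable, and let d̄ : ℝ → ℝ^m, ω : ℝ → ℝ^p satisfy |d̄(t)_i| ≤ c and |ω(t)_j| ≤ ω̄ for all t, i, j. Suppose for all t: Ē ē′(t) = (Ā − L C̄) ē(t) + L C_ω(−ω̄·sgn(H₂ C̄ ē(t)) − ω(t)) + B̄_f(d̄(t) − ρ·sgn(H₁ C̄ ē(t))), and Ē ε̄′(t) = (Ā − 𝓛) ε̄(t) + L C̄ ē(t) + L C_ω(ω(t) − ω̄·sgn(H₃ ε̄(t))). Then V(t) = ē(t)ᵀ P ē(t) + ε̄(t)ᵀ P ε̄(t) is differentiable with V′(t) ≤ 0 for every t, and V′(t) < 0 whenever (ē(t), ε̄(t)) ≠ (0, 0). -/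
/-!
Write `ξ = (ē, ε̄)`. Differentiating `V` gives `V' = 2 (ēᵀ P ē' + ε̄ᵀ P ε̄')`, and `P ē' = (P Ē⁻¹) (Ē ē')`.
Substituting the error dynamics and using `P Ē⁻¹ L = N₁`, `P Ē⁻¹ 𝓛 = N₂` and the matching conditions
on `H₁, H₂, H₃`, the linear terms add up to `ξᵀ Ξ ξ`, while each discontinuous term takes the form
`yᵀ (w - b sgn y)` with `|wᵢ| ≤ b`, which is `≤ 0` because `y · sgn y = ‖y‖₁`.
Hence `V' ≤ ξᵀ Ξ ξ`, and negative definiteness of `Ξ` concludes.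
-/

open Matrix

noncomputable def sgn {k : Type*} (s : k → ℝ) : k → ℝ := fun i => Real.sign (s i)

theorem Real.self_mul_sign (y : ℝ) : y * Real.sign y = |y| := by
  rcases lt_trichotomy y 0 with h | rfl | h
  · rw [Real.sign_of_neg h, abs_of_neg h]; ring
  · simp
  · rw [Real.sign_of_pos h, abs_of_pos h]; ring

theorem dotProduct_sub_smul_sgn_nonpos {k : Type*} [Fintype k] {b c : ℝ} (hcb : c ≤ b)
    (y w : k → ℝ) (hw : ∀ i, |w i| ≤ c) : y ⬝ᵥ (w - b • sgn y) ≤ 0 := by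
  refine Finset.sum_nonpos fun i _ => ?_
  have hyw : y i * w i ≤ |y i| * b :=
    calc y i * w i ≤ |y i| * |w i| := by rw [← abs_mul]; exact le_abs_self _
      _ ≤ |y i| * b := mul_le_mul_of_nonneg_left ((hw i).trans hcb) (abs_nonneg _)
  calc y i * (w i - b * Real.sign (y i)) = y i * w i - b * (y i * Real.sign (y i)) := by ring
    _ ≤ 0 := by rw [Real.self_mul_sign]; linarith

theorem isUnit_det_of_dotProduct_mulVec_pos {n : Type*} [Fintype n] [DecidableEq n]
    {P : Matrix n n ℝ} (hP : ∀ x : n → ℝ, x ≠ 0 → 0 < x ⬝ᵥ P *ᵥ x) : IsUnit P.det := by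
  refine isUnit_iff_ne_zero.2 fun hdet => ?_
  obtain ⟨x, hx, hPx⟩ := exists_mulVec_eq_zero_iff.2 hdet
  simpa [hPx] using hP x hx

theorem mul_inv_mul_mul_inv_mul {n k : Type*} [Fintype n] [DecidableEq n]
    {P E : Matrix n n ℝ} (hP : IsUnit P.det) (hE : IsUnit E.det) (N : Matrix n k ℝ) :
    P * E⁻¹ * (E * P⁻¹ * N) = N := by
  rw [Matrix.mul_assoc, Matrix.mul_assoc, nonsing_inv_mul_cancel_left _ _ hE,
    mul_nonsing_inv_cancel_left _ _ hP]

theorem HasDerivAt.dotProduct_mulVec_self {n : Type*} [Fintype n] {P : Matrix n n ℝ}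
    (hP : Pᵀ = P) {f : ℝ → n → ℝ} {f' : n → ℝ} {t : ℝ} (hf : HasDerivAt f f' t) :
    HasDerivAt (fun s => f s ⬝ᵥ P *ᵥ f s) (2 * (f t ⬝ᵥ P *ᵥ f')) t := by
  have hcoord i : HasDerivAt (fun s => f s i) (f' i) t := hasDerivAt_pi.1 hf i
  have hrow i : HasDerivAt (fun s => (P *ᵥ f s) i) ((P *ᵥ f') i) t := by
    simpa only [mulVec, dotProduct] using
      HasDerivAt.fun_sum fun j _ => (hcoord j).const_mul (P i j)
  have hsum : HasDerivAt (fun s => f s ⬝ᵥ P *ᵥ f s) (f' ⬝ᵥ P *ᵥ f t + f t ⬝ᵥ P *ᵥ f') t := by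
    simpa only [dotProduct, Finset.sum_add_distrib, Pi.mul_apply] using
      HasDerivAt.fun_sum fun i (_ : i ∈ Finset.univ) => (hcoord i).mul (hrow i)
  rwa [← dotProduct_transpose_mulVec, hP, ← two_mul] at hsum

section ErrorDynamics

variable {n k l : Type*} [Fintype n] [Fintype k] [Fintype l]
  {A P E M : Matrix n n ℝ} {C : Matrix k n ℝ} {L N₁ : Matrix n k ℝ} {Cω : Matrix k k ℝ}

theorem smo_error_dotProduct_mulVec {Bf : Matrix n l ℝ} {G₁ : Matrix l n ℝ} {G₂ : Matrix k n ℝ}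
    (hME : M * E = P) (hML : M * L = N₁) (hG₁ : G₁ᵀ = M * Bf) (hG₂ : G₂ᵀ = M * L * Cω)
    {x v : n → ℝ} {u₁ : l → ℝ} {u₂ : k → ℝ}
    (hv : E *ᵥ v = (A - L * C) *ᵥ x + (L * Cω) *ᵥ u₂ + Bf *ᵥ u₁) :
    x ⬝ᵥ P *ᵥ v = x ⬝ᵥ (M * A - N₁ * C) *ᵥ x + (G₂ *ᵥ x) ⬝ᵥ u₂ + (G₁ *ᵥ x) ⬝ᵥ u₁ := by
  rw [← hME, ← mulVec_mulVec, hv, mulVec_add, mulVec_add, mulVec_mulVec, mulVec_mulVec,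
    mulVec_mulVec, Matrix.mul_sub, ← Matrix.mul_assoc, hML, ← Matrix.mul_assoc, ← hG₂, ← hG₁,
    dotProduct_add, dotProduct_add, dotProduct_transpose_mulVec, dotProduct_transpose_mulVec,
    dotProduct_comm u₂, dotProduct_comm u₁]

theorem cascade_error_dotProduct_mulVec {Lc N₂ : Matrix n n ℝ} {H : Matrix k n ℝ}
    (hME : M * E = P) (hML : M * L = N₁) (hMLc : M * Lc = N₂) (hH : Hᵀ = M * L * Cω)
    {x y v : n → ℝ} {u : k → ℝ}
    (hv : E *ᵥ v = (A - Lc) *ᵥ y + (L * C) *ᵥ x + (L * Cω) *ᵥ u) :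
    y ⬝ᵥ P *ᵥ v = y ⬝ᵥ (M * A - N₂) *ᵥ y + y ⬝ᵥ (N₁ * C) *ᵥ x + (H *ᵥ y) ⬝ᵥ u := by
  rw [← hME, ← mulVec_mulVec, hv, mulVec_add, mulVec_add, mulVec_mulVec, mulVec_mulVec,
    mulVec_mulVec, Matrix.mul_sub, hMLc, ← Matrix.mul_assoc, hML, ← Matrix.mul_assoc, ← hH,
    dotProduct_add, dotProduct_add, dotProduct_transpose_mulVec, dotProduct_comm u]

end ErrorDynamics

theorem sumElim_dotProduct_fromBlocks_mulVec_sumElim {n k : Type*} [Fintype n] [Fintype k]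
    (G N₂ : Matrix n n ℝ) (N₁ : Matrix n k ℝ) (C : Matrix k n ℝ) (x y : n → ℝ) :
    Sum.elim x y ⬝ᵥ fromBlocks (G + Gᵀ - N₁ * C - Cᵀ * N₁ᵀ) (N₁ * C)ᵀ (N₁ * C)ᵀᵀ
        (G + Gᵀ - N₂ - N₂ᵀ) *ᵥ Sum.elim x y =
      2 * (x ⬝ᵥ (G - N₁ * C) *ᵥ x) + 2 * (y ⬝ᵥ (G - N₂) *ᵥ y + y ⬝ᵥ (N₁ * C) *ᵥ x) := by
  rw [← transpose_mul, fromBlocks_mulVec, sumElim_dotProduct_sumElim]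
  simp only [sub_mulVec, add_mulVec, dotProduct_sub, dotProduct_add, transpose_transpose,
    Sum.elim_comp_inl, Sum.elim_comp_inr, dotProduct_transpose_mulVec]
  ring

theorem stmt8_general {q m p : ℕ}
    (A P E : Matrix (Fin q) (Fin q) ℝ)
    (hPsymm : Pᵀ = P) (hPpos : ∀ x : Fin q → ℝ, x ≠ 0 → 0 < x ⬝ᵥ P.mulVec x)
    (hE : IsUnit E.det)
    (C : Matrix (Fin p) (Fin q) ℝ)
    (N₁ : Matrix (Fin q) (Fin p) ℝ) (N₂ : Matrix (Fin q) (Fin q) ℝ)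
    (Bf : Matrix (Fin q) (Fin m) ℝ) (Cω : Matrix (Fin p) (Fin p) ℝ)
    (H₁ : Matrix (Fin m) (Fin p) ℝ) (H₂ : Matrix (Fin p) (Fin p) ℝ)
    (H₃ : Matrix (Fin p) (Fin q) ℝ)
    (L : Matrix (Fin q) (Fin p) ℝ) (hL : L = E * P⁻¹ * N₁)
    (Lc : Matrix (Fin q) (Fin q) ℝ) (hLc : Lc = E * P⁻¹ * N₂)
    (Ξ : Matrix ((Fin q) ⊕ (Fin q)) ((Fin q) ⊕ (Fin q)) ℝ)
    (hΞ : Ξ = fromBlocks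
      (P * E⁻¹ * A + (P * E⁻¹ * A)ᵀ - N₁ * C - Cᵀ * N₁ᵀ)
      ((N₁ * C)ᵀ)
      ((N₁ * C)ᵀ)ᵀ
      (P * E⁻¹ * A + (P * E⁻¹ * A)ᵀ - N₂ - N₂ᵀ))
    (hNegDef : ∀ ξ : Fin q ⊕ Fin q → ℝ, ξ ≠ 0 → ξ ⬝ᵥ Ξ.mulVec ξ < 0)
    (hH₁ : (H₁ * C)ᵀ = P * E⁻¹ * Bf)
    (hH₂ : (H₂ * C)ᵀ = P * E⁻¹ * L * Cω)
    (hH₃ : H₃ᵀ = P * E⁻¹ * L * Cω)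
    (c η ρ ωb : ℝ) (hη : 0 ≤ η) (hρ : ρ = c + η)
    (e ε : ℝ → Fin q → ℝ) (he : Differentiable ℝ e) (hε : Differentiable ℝ ε)
    (d : ℝ → Fin m → ℝ) (ω : ℝ → Fin p → ℝ)
    (hd : ∀ t i, |d t i| ≤ c) (hω : ∀ t j, |ω t j| ≤ ωb)
    (hedyn : ∀ t, E.mulVec (deriv e t) =
      (A - L * C).mulVec (e t)
        + (L * Cω).mulVec (-(ωb • sgn ((H₂ * C).mulVec (e t))) - ω t)
        + Bf.mulVec (d t - ρ • sgn ((H₁ * C).mulVec (e t))))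
    (hεdyn : ∀ t, E.mulVec (deriv ε t) =
      (A - Lc).mulVec (ε t) + (L * C).mulVec (e t)
        + (L * Cω).mulVec (ω t - ωb • sgn (H₃.mulVec (ε t)))) :
    Differentiable ℝ (fun t => e t ⬝ᵥ P.mulVec (e t) + ε t ⬝ᵥ P.mulVec (ε t)) ∧
      (∀ t, deriv (fun t => e t ⬝ᵥ P.mulVec (e t) + ε t ⬝ᵥ P.mulVec (ε t)) t ≤ 0) ∧
      (∀ t, (e t, ε t) ≠ (0, 0) →
        deriv (fun t => e t ⬝ᵥ P.mulVec (e t) + ε t ⬝ᵥ P.mulVec (ε t)) t < 0) := by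
  have hP : IsUnit P.det := isUnit_det_of_dotProduct_mulVec_pos hPpos
  have hME : P * E⁻¹ * E = P := nonsing_inv_mul_cancel_right _ _ hE
  have hML : P * E⁻¹ * L = N₁ := hL ▸ mul_inv_mul_mul_inv_mul hP hE N₁
  have hMLc : P * E⁻¹ * Lc = N₂ := hLc ▸ mul_inv_mul_mul_inv_mul hP hE N₂
  have hV t : HasDerivAt (fun t => e t ⬝ᵥ P.mulVec (e t) + ε t ⬝ᵥ P.mulVec (ε t))
      (2 * (e t ⬝ᵥ P *ᵥ deriv e t) + 2 * (ε t ⬝ᵥ P *ᵥ deriv ε t)) t :=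
    ((he t).hasDerivAt.dotProduct_mulVec_self hPsymm).add
      ((hε t).hasDerivAt.dotProduct_mulVec_self hPsymm)
  have hbound t : deriv (fun t => e t ⬝ᵥ P.mulVec (e t) + ε t ⬝ᵥ P.mulVec (ε t)) t ≤
      Sum.elim (e t) (ε t) ⬝ᵥ Ξ *ᵥ Sum.elim (e t) (ε t) := by
    have hsw₁ := dotProduct_sub_smul_sgn_nonpos (show c ≤ ρ by linarith)
      ((H₁ * C) *ᵥ e t) (d t) (hd t)
    have hsw₂ := dotProduct_sub_smul_sgn_nonpos le_rfl ((H₂ * C) *ᵥ e t) (-ω t)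
      fun j => (abs_neg (ω t j)).trans_le (hω t j)
    have hsw₃ := dotProduct_sub_smul_sgn_nonpos le_rfl (H₃ *ᵥ ε t) (ω t) (hω t)
    rw [← neg_sub_comm] at hsw₂
    rw [(hV t).deriv, smo_error_dotProduct_mulVec hME hML hH₁ hH₂ (hedyn t),
      cascade_error_dotProduct_mulVec hME hML hMLc hH₃ (hεdyn t), hΞ,
      sumElim_dotProduct_fromBlocks_mulVec_sumElim]
    linarith
  refine ⟨fun t => (hV t).differentiableAt, fun t => (hbound t).trans ?_,
    fun t ht => (hbound t).trans_lt (hNegDef _ ?_)⟩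
  · by_cases hξ : Sum.elim (e t) (ε t) = 0
    · simp [hξ]
    · exact (hNegDef _ hξ).le
  · simpa [funext_iff, Sum.forall] using ht

/-- Theorem 3 of the paper: stability of the two-layer sliding mode cascade
observer (SMO-CO) error dynamics, with first-layer error `e`, cascade error `ε`, and three
discontinuous functions. -/
theorem stmt8 {q m p : ℕ}
    (A P E : Matrix (Fin q) (Fin q) ℝ)
    (hPsymm : Pᵀ = P) (hPpos : ∀ x : Fin q → ℝ, x ≠ 0 → 0 < x ⬝ᵥ P.mulVec x)
    (hE : IsUnit E.det)
    (C : Matrix (Fin p) (Fin q) ℝ)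
    (N₁ : Matrix (Fin q) (Fin p) ℝ) (N₂ : Matrix (Fin q) (Fin q) ℝ)
    (Bf : Matrix (Fin q) (Fin m) ℝ) (Cω : Matrix (Fin p) (Fin p) ℝ)
    (H₁ : Matrix (Fin m) (Fin p) ℝ) (H₂ : Matrix (Fin p) (Fin p) ℝ)
    (H₃ : Matrix (Fin p) (Fin q) ℝ)
    (L : Matrix (Fin q) (Fin p) ℝ) (hL : L = E * P⁻¹ * N₁)
    (Lc : Matrix (Fin q) (Fin q) ℝ) (hLc : Lc = E * P⁻¹ * N₂)
    (Ξ : Matrix ((Fin q) ⊕ (Fin q)) ((Fin q) ⊕ (Fin q)) ℝ)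
    (hΞ : Ξ = fromBlocks
      (P * E⁻¹ * A + (P * E⁻¹ * A)ᵀ - N₁ * C - Cᵀ * N₁ᵀ)
      ((N₁ * C)ᵀ)
      ((N₁ * C)ᵀ)ᵀ
      (P * E⁻¹ * A + (P * E⁻¹ * A)ᵀ - N₂ - N₂ᵀ))
    (hNegDef : ∀ ξ : Fin q ⊕ Fin q → ℝ, ξ ≠ 0 → ξ ⬝ᵥ Ξ.mulVec ξ < 0)
    (hH₁ : (H₁ * C)ᵀ = P * E⁻¹ * Bf)
    (hH₂ : (H₂ * C)ᵀ = P * E⁻¹ * L * Cω)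
    (hH₃ : H₃ᵀ = P * E⁻¹ * L * Cω)
    (c η ρ ωb : ℝ) (hc : 0 ≤ c) (hη : 0 ≤ η) (hρ : ρ = c + η) (hωb : 0 ≤ ωb)
    (e ε : ℝ → Fin q → ℝ) (he : Differentiable ℝ e) (hε : Differentiable ℝ ε)
    (d : ℝ → Fin m → ℝ) (ω : ℝ → Fin p → ℝ)
    (hd : ∀ t i, |d t i| ≤ c) (hω : ∀ t j, |ω t j| ≤ ωb)
    (hedyn : ∀ t, E.mulVec (deriv e t) =
      (A - L * C).mulVec (e t)
        + (L * Cω).mulVec (-(ωb • sgn ((H₂ * C).mulVec (e t))) - ω t)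
        + Bf.mulVec (d t - ρ • sgn ((H₁ * C).mulVec (e t))))
    (hεdyn : ∀ t, E.mulVec (deriv ε t) =
      (A - Lc).mulVec (ε t) + (L * C).mulVec (e t)
        + (L * Cω).mulVec (ω t - ωb • sgn (H₃.mulVec (ε t)))) :
    Differentiable ℝ (fun t => e t ⬝ᵥ P.mulVec (e t) + ε t ⬝ᵥ P.mulVec (ε t)) ∧
      (∀ t, deriv (fun t => e t ⬝ᵥ P.mulVec (e t) + ε t ⬝ᵥ P.mulVec (ε t)) t ≤ 0) ∧
      (∀ t, (e t, ε t) ≠ (0, 0) →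
        deriv (fun t => e t ⬝ᵥ P.mulVec (e t) + ε t ⬝ᵥ P.mulVec (ε t)) t < 0) :=
  stmt8_general A P E hPsymm hPpos hE C N₁ N₂ Bf Cω H₁ H₂ H₃ L hL Lc hLc Ξ hΞ hNegDef hH₁ hH₂ hH₃ c
    η ρ ωb hη hρ e ε he hε d ω hd hω hedyn hεdyn
end

section
/- Let Ā, P, Ē ∈ ℝ^{q×q} with P symmetric and Ē invertible, C̄ ∈ ℝ^{p×q}, N ∈ ℝ^{q×p}, B̄_f ∈ ℝ^{q×m}, C_ω ∈ ℝ^{p×p}, H₁ ∈ ℝ^{m×p}, H₂ ∈ ℝ^{p×p}. Set L = Ē P⁻¹ N (P invertible) and assume (H₁ C̄)ᵀ = P Ē⁻¹ B̄_f and (H₂ C̄)ᵀ = P Ē⁻¹ L C_ω. Let ρ = c + η with c ≥ 0, η ≥ 0, and ω̄ ≥ 0. Then for every e ∈ ℝ^q, every v ∈ ℝ^m with |v_i| ≤ c for all i, and every ω ∈ ℝ^p with |ω_j| ≤ ω̄ for all j, the full Lyapunov derivative expression satisfies 2 eᵀ P Ē⁻¹ (Ā − L C̄) e + 2 eᵀ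 P Ē⁻¹ L C_ω (−ω̄·sgn(H₂ C̄ e) − ω) + 2 eᵀ P Ē⁻¹ B̄_f (v − ρ·sgn(H₁ C̄ e)) ≤ eᵀ (P Ē⁻¹ Ā + Āᵀ Ē⁻ᵀ P − N C̄ − C̄ᵀ Nᵀ) e − 2η · ‖H₁ C̄ e‖₁. -/
open Matrix Finset

lemma real_self_mul_sign (x : ℝ) : x * Real.sign x = |x| := by
  rcases lt_trichotomy x 0 with h | h | h
  · rw [Real.sign_of_neg h, abs_of_neg h]; ring
  · simp [h]
  · rw [Real.sign_of_pos h, abs_of_pos h]; ring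

lemma dot_shift {n k : ℕ} (M : Matrix (Fin n) (Fin k) ℝ) (e : Fin n → ℝ) (x : Fin k → ℝ) :
    e ⬝ᵥ M.mulVec x = Mᵀ.mulVec e ⬝ᵥ x := by
  rw [Matrix.dotProduct_mulVec, Matrix.mulVec_transpose]
/-- combined estimate in the proof of Theorem 1 of the paper: the full
Lyapunov derivative expression is bounded by the quadratic form of the LMI matrix minus the
sliding-margin term `2η‖H₁ C̄ e‖₁`. -/
theorem stmt14 {q m p : ℕ}
    (A P E : Matrix (Fin q) (Fin q) ℝ)
    (hPsymm : Pᵀ = P) (hPinv : IsUnit P.det) (hE : IsUnit E.det)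
    (C : Matrix (Fin p) (Fin q) ℝ) (N : Matrix (Fin q) (Fin p) ℝ)
    (Bf : Matrix (Fin q) (Fin m) ℝ) (Cω : Matrix (Fin p) (Fin p) ℝ)
    (H₁ : Matrix (Fin m) (Fin p) ℝ) (H₂ : Matrix (Fin p) (Fin p) ℝ)
    (L : Matrix (Fin q) (Fin p) ℝ) (hL : L = E * P⁻¹ * N)
    (hH₁ : (H₁ * C)ᵀ = P * E⁻¹ * Bf)
    (hH₂ : (H₂ * C)ᵀ = P * E⁻¹ * L * Cω)
    (c η ρ ωb : ℝ) (hc : 0 ≤ c) (hη : 0 ≤ η) (hρ : ρ = c + η) (hωb : 0 ≤ ωb)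
    (e : Fin q → ℝ) (v : Fin m → ℝ) (ω : Fin p → ℝ)
    (hv : ∀ i, |v i| ≤ c) (hω : ∀ j, |ω j| ≤ ωb) :
    2 * (e ⬝ᵥ (P * E⁻¹ * (A - L * C)).mulVec e)
      + 2 * (e ⬝ᵥ (P * E⁻¹ * L * Cω).mulVec (-(ωb • sgn ((H₂ * C).mulVec e)) - ω))
      + 2 * (e ⬝ᵥ (P * E⁻¹ * Bf).mulVec (v - ρ • sgn ((H₁ * C).mulVec e)))
    ≤ e ⬝ᵥ (P * E⁻¹ * A + Aᵀ * (E⁻¹)ᵀ * P - N * C - Cᵀ * Nᵀ).mulVec e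
        - 2 * η * (∑ i, |(H₁ * C).mulVec e i|) := by
  have hN : P * E⁻¹ * L = N := by
    rw [hL]
    rw [show P * E⁻¹ * (E * P⁻¹ * N) = P * (E⁻¹ * E) * (P⁻¹ * N) from by
        simp [Matrix.mul_assoc],
      Matrix.nonsing_inv_mul E hE, Matrix.mul_one, ← Matrix.mul_assoc,
      Matrix.mul_nonsing_inv P hPinv, Matrix.one_mul]
  -- drift term
  set M := P * E⁻¹ * (A - L * C) with hM
  have hMsum : P * E⁻¹ * A + Aᵀ * (E⁻¹)ᵀ * P - N * C - Cᵀ * Nᵀ = M + Mᵀ := by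
    have h1 : P * E⁻¹ * (L * C) = N * C := by rw [← Matrix.mul_assoc, hN]
    rw [hM, Matrix.mul_sub, h1]
    simp only [Matrix.transpose_sub, Matrix.transpose_mul, hPsymm, Matrix.mul_assoc]
    abel
  have hdrift : 2 * (e ⬝ᵥ M.mulVec e)
      = e ⬝ᵥ (P * E⁻¹ * A + Aᵀ * (E⁻¹)ᵀ * P - N * C - Cᵀ * Nᵀ).mulVec e := by
    rw [hMsum, Matrix.add_mulVec, dotProduct_add]
    rw [show e ⬝ᵥ Mᵀ.mulVec e = e ⬝ᵥ M.mulVec e by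
      rw [dot_shift, Matrix.transpose_transpose, dotProduct_comm]]
    ring
  -- noise term
  set s := (H₂ * C).mulVec e with hs
  have hterm2 : e ⬝ᵥ (P * E⁻¹ * L * Cω).mulVec (-(ωb • sgn s) - ω) ≤ 0 := by
    rw [← hH₂, dot_shift, Matrix.transpose_transpose, ← hs, dotProduct]
    apply Finset.sum_nonpos
    intro i _
    simp only [Pi.sub_apply, Pi.neg_apply, Pi.smul_apply, smul_eq_mul, sgn]
    have h1 : s i * (-(ωb * Real.sign (s i)) - ω i)
        = -(ωb * |s i|) - s i * ω i := by
      rw [show s i * (-(ωb * Real.sign (s i)) - ω i)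
        = -(ωb * (s i * Real.sign (s i))) - s i * ω i by ring, real_self_mul_sign]
    rw [h1]
    have h2 : -(s i * ω i) ≤ |s i| * ωb := by
      calc -(s i * ω i) ≤ |s i * ω i| := neg_le_abs _
      _ = |s i| * |ω i| := abs_mul _ _
      _ ≤ |s i| * ωb := mul_le_mul_of_nonneg_left (hω i) (abs_nonneg _)
    linarith
  -- fault term
  set t := (H₁ * C).mulVec e with ht
  have hterm3 : e ⬝ᵥ (P * E⁻¹ * Bf).mulVec (v - ρ • sgn t) ≤ -η * ∑ i, |t i| := by
    rw [← hH₁, dot_shift, Matrix.transpose_transpose, ← ht, dotProduct]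
    rw [show -η * ∑ i, |t i| = ∑ i, -η * |t i| by rw [Finset.mul_sum]]
    apply Finset.sum_le_sum
    intro i _
    simp only [Pi.sub_apply, Pi.smul_apply, smul_eq_mul, sgn]
    have h1 : t i * (v i - ρ * Real.sign (t i)) = t i * v i - ρ * |t i| := by
      rw [show t i * (v i - ρ * Real.sign (t i))
        = t i * v i - ρ * (t i * Real.sign (t i)) by ring, real_self_mul_sign]
    rw [h1, hρ]
    have h2 : t i * v i ≤ |t i| * c := by
      calc t i * v i ≤ |t i * v i| := le_abs_self _
      _ = |t i| * |v i| := abs_mul _ _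
      _ ≤ |t i| * c := mul_le_mul_of_nonneg_left (hv i) (abs_nonneg _)
    nlinarith [abs_nonneg (t i)]
  calc 2 * (e ⬝ᵥ M.mulVec e)
      + 2 * (e ⬝ᵥ (P * E⁻¹ * L * Cω).mulVec (-(ωb • sgn s) - ω))
      + 2 * (e ⬝ᵥ (P * E⁻¹ * Bf).mulVec (v - ρ • sgn t))
      ≤ 2 * (e ⬝ᵥ M.mulVec e) + 2 * 0 + 2 * (-η * ∑ i, |t i|) := by
        have := hterm2; have := hterm3; linarith
    _ = e ⬝ᵥ (P * E⁻¹ * A + Aᵀ * (E⁻¹)ᵀ * P - N * C - Cᵀ * Nᵀ).mulVec e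
        - 2 * η * (∑ i, |t i|) := by rw [← hdrift]; ring
end
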